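/- arXiv:1807.11030 — 9 statements merged into one kernel-verified Lean document; each statement's English description precedes it below -/
import Mathlib

section
/- For an ideal $I$ of $R$ the following are equivalent: (i) for all $a \in I$ and $b \in R$, $h_Y(a) \subseteq h_Y(b)$ implies $b \in I$ (i.e. $I$ is an $\mathcal{H}_Y$-ideal); (ii) for every $a \in I$, $k(h_Y(a)) \subseteq I$; (iii) for all $a \in I$ and $b \in R$, $k(h_Y(b)) \subseteq k(h_Y(a))$ implies $b \in I$; (iv) for every $a \in I$ and every subset $S$ of $R$, $h_Y(a) \subseteq h_Y(S)$ implies $S \subseteq I$; (v) for every $a \in I$ and $b \in R$, $h_Y(a) = h_Y(b)$ implies $b \in I$. -/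
/-!
Membership of `b` in `k(h_Y(a))` just says `h_Y(a) ⊆ h_Y(b)`, which gives (i) ⇔ (ii) ⇔ (iii),
and (iv) for a set `S` is (i) applied to each element of `S`. The only step that needs the
primes is (v) ⇒ (i): for primes `h_Y(ab) = h_Y(a) ∪ h_Y(b)`, so if `h_Y(a) ⊆ h_Y(b)` then
`ab ∈ I` has `h_Y(ab) = h_Y(b)`.
-/

/-- `hSet Y S` is the set of primes (ideals) in `Y` containing the subset `S`. -/
def hSet {R : Type*} [CommRing R] (Y : Set (Ideal R)) (S : Set R) : Set (Ideal R) :=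
  {P ∈ Y | S ⊆ (P : Set R)}

/-- `kSet 𝒮` is the intersection of the ideals in `𝒮` (the whole ring if `𝒮 = ∅`). -/
def kSet {R : Type*} [CommRing R] (𝒮 : Set (Ideal R)) : Ideal R := sInf 𝒮

/-- An `ℋ_Y`-ideal. -/
def IsHIdeal {R : Type*} [CommRing R] (Y : Set (Ideal R)) (I : Ideal R) : Prop :=
  ∀ a ∈ I, ∀ b : R, hSet Y {a} ⊆ hSet Y {b} → b ∈ I

/-- A strong `ℋ_Y`-ideal. -/
def IsStrongHIdeal {R : Type*} [CommRing R] (Y : Set (Ideal R)) (I : Ideal R) : Prop :=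
  ∀ F : Set R, F.Finite → F ⊆ (I : Set R) → ∀ b : R, hSet Y F ⊆ hSet Y {b} → b ∈ I

/-- A `Y`-Hilbert ideal. -/
def IsYHilbert {R : Type*} [CommRing R] (Y : Set (Ideal R)) (I : Ideal R) : Prop :=
  I = kSet (hSet Y (I : Set R))

section

variable {R : Type*} [CommRing R] {Y : Set (Ideal R)}

@[simp]
lemma mem_hSet_singleton {a : R} {P : Ideal R} : P ∈ hSet Y {a} ↔ P ∈ Y ∧ a ∈ P := by
  simp [hSet]

lemma mem_kSet_hSet_singleton {a b : R} : b ∈ kSet (hSet Y {a}) ↔ hSet Y {a} ⊆ hSet Y {b} := by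
  simp only [kSet, Ideal.mem_sInf, Set.subset_def, mem_hSet_singleton]
  exact ⟨fun h P hP => ⟨hP.1, h hP⟩, fun h P hP => (h P hP).2⟩

lemma mem_kSet_hSet_singleton_self (a : R) : a ∈ kSet (hSet Y {a}) :=
  mem_kSet_hSet_singleton.mpr subset_rfl

lemma kSet_hSet_singleton_le_iff {a b : R} :
    kSet (hSet Y {b}) ≤ kSet (hSet Y {a}) ↔ hSet Y {a} ⊆ hSet Y {b} :=
  ⟨fun h => mem_kSet_hSet_singleton.mp (h (mem_kSet_hSet_singleton_self b)),
    fun h => sInf_le_sInf h⟩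

lemma hSet_subset_hSet_iff_forall_mem {T S : Set R} :
    hSet Y T ⊆ hSet Y S ↔ ∀ s ∈ S, hSet Y T ⊆ hSet Y {s} := by
  simp only [hSet, Set.subset_def, Set.mem_ofPred_eq, Set.mem_singleton_iff, forall_eq,
    SetLike.mem_coe]
  exact ⟨fun h s hs P hP => ⟨hP.1, (h P hP).2 s hs⟩,
    fun h P hP => ⟨hP.1, fun s hs => (h s hs P hP).2⟩⟩

lemma hSet_singleton_mul (hprime : ∀ P ∈ Y, P.IsPrime) (a b : R) :
    hSet Y {a * b} = hSet Y {a} ∪ hSet Y {b} := by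
  ext P
  simp only [Set.mem_union, mem_hSet_singleton, ← and_or_left]
  exact and_congr_right fun hP => (hprime P hP).mul_mem_iff_mem_or_mem

lemma hSet_singleton_mul_of_subset (hprime : ∀ P ∈ Y, P.IsPrime) {a b : R}
    (h : hSet Y {a} ⊆ hSet Y {b}) : hSet Y {a * b} = hSet Y {b} := by
  rw [hSet_singleton_mul hprime, Set.union_eq_right.mpr h]

end

/-- equivalent characterizations of `ℋ_Y`-ideals. -/
theorem stmt1 {R : Type*} [CommRing R] (Y : Set (Ideal R))
    (hprime : ∀ P ∈ Y, P.IsPrime) (I : Ideal R) :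
    [ (∀ a ∈ I, ∀ b : R, hSet Y {a} ⊆ hSet Y {b} → b ∈ I),
      (∀ a ∈ I, kSet (hSet Y {a}) ≤ I),
      (∀ a ∈ I, ∀ b : R, kSet (hSet Y {b}) ≤ kSet (hSet Y {a}) → b ∈ I),
      (∀ a ∈ I, ∀ S : Set R, hSet Y {a} ⊆ hSet Y S → S ⊆ (I : Set R)),
      (∀ a ∈ I, ∀ b : R, hSet Y {a} = hSet Y {b} → b ∈ I) ].TFAE := by
  tfae_have 1 ↔ 2 := by
    simp only [SetLike.le_def, mem_kSet_hSet_singleton]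
  tfae_have 1 ↔ 3 := by
    simp only [kSet_hSet_singleton_le_iff]
  tfae_have 1 → 4 := fun h a ha S hS s hs =>
    h a ha s (hSet_subset_hSet_iff_forall_mem.mp hS s hs)
  tfae_have 4 → 5 := fun h a ha b hab => h a ha {b} hab.subset rfl
  tfae_have 5 → 1 := fun h a ha b hab =>
    h (a * b) (I.mul_mem_right b ha) b (hSet_singleton_mul_of_subset hprime hab)
  tfae_finish
end

section
/- For an ideal $I$ of $R$ the following are equivalent: (i) for every finite subset $F$ of $I$ and every $b \in R$, $h_Y(F) \subseteq h_Y(b)$ implies $b \in I$ (i.e. $I$ is a strong $\mathcal{H}_Y$-ideal); (ii) for every finite subset $F$ of $I$, $k(h_Y(F)) \subseteq I$; (iii) for every finite subset $F$ of $I$ and every subset $S$ of $R$, $k(h_Y(S)) \subseteq k(h_Y(F))$ implies $S \subseteq I$; (iv) for all finite subsets $F$ of $I$ and finite subsets $G$ of $R$, $h_Y(F) \subseteq h_Y(G)$ implies $G \subseteq I$. -/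
section

variable {R : Type*} [CommRing R] {Y : Set (Ideal R)}

theorem mem_kSet_hSet {S : Set R} {b : R} :
    b ∈ kSet (hSet Y S) ↔ hSet Y S ⊆ hSet Y {b} :=
  ⟨fun hb _ hP => ⟨hP.1, Set.singleton_subset_iff.2 (Ideal.mem_sInf.1 hb hP)⟩,
    fun h => Ideal.mem_sInf.2 fun {_} hP => Set.singleton_subset_iff.1 (h hP).2⟩

theorem subset_kSet_hSet (S : Set R) : S ⊆ (kSet (hSet Y S) : Set R) :=
  fun _ ha => Ideal.mem_sInf.2 fun {_} hP => hP.2 ha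

theorem kSet_anti {𝒮 𝒯 : Set (Ideal R)} (h : 𝒮 ⊆ 𝒯) : kSet 𝒯 ≤ kSet 𝒮 :=
  sInf_le_sInf h

end

theorem stmt2_general {R : Type*} [CommRing R] (Y : Set (Ideal R))
    (I : Ideal R) :
    [ (∀ F : Set R, F.Finite → F ⊆ (I : Set R) →
        ∀ b : R, hSet Y F ⊆ hSet Y {b} → b ∈ I),
      (∀ F : Set R, F.Finite → F ⊆ (I : Set R) → kSet (hSet Y F) ≤ I),
      (∀ F : Set R, F.Finite → F ⊆ (I : Set R) →
        ∀ S : Set R, kSet (hSet Y S) ≤ kSet (hSet Y F) → S ⊆ (I : Set R)),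
      (∀ F : Set R, F.Finite → F ⊆ (I : Set R) →
        ∀ G : Set R, G.Finite → hSet Y F ⊆ hSet Y G → G ⊆ (I : Set R)) ].TFAE := by
  tfae_have 1 → 2 := fun h F hF hFI b hb => h F hF hFI b (mem_kSet_hSet.1 hb)
  tfae_have 2 → 3 := fun h F hF hFI S hS a ha => h F hF hFI (hS (subset_kSet_hSet S ha))
  tfae_have 3 → 4 := fun h F hF hFI G _ hFG => h F hF hFI G (kSet_anti hFG)
  tfae_have 4 → 1 := fun h F hF hFI b hb =>
    h F hF hFI {b} (Set.finite_singleton b) hb (Set.mem_singleton b)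
  tfae_finish

/-- equivalent characterizations of strong `ℋ_Y`-ideals. -/
theorem stmt2 {R : Type*} [CommRing R] (Y : Set (Ideal R))
    (hprime : ∀ P ∈ Y, P.IsPrime) (I : Ideal R) :
    [ (∀ F : Set R, F.Finite → F ⊆ (I : Set R) →
        ∀ b : R, hSet Y F ⊆ hSet Y {b} → b ∈ I),
      (∀ F : Set R, F.Finite → F ⊆ (I : Set R) → kSet (hSet Y F) ≤ I),
      (∀ F : Set R, F.Finite → F ⊆ (I : Set R) →
        ∀ S : Set R, kSet (hSet Y S) ≤ kSet (hSet Y F) → S ⊆ (I : Set R)),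
      (∀ F : Set R, F.Finite → F ⊆ (I : Set R) →
        ∀ G : Set R, G.Finite → hSet Y F ⊆ hSet Y G → G ⊆ (I : Set R)) ].TFAE :=
  stmt2_general Y I
end

section
/- Suppose $k(Y) = \langle 0 \rangle$. Then for every subset $S$ of $R$, the interior of $h_Y(S)$ in the space $Y$ equals $h_Y^c(\mathrm{Ann}(S)) = \{P \in Y : \mathrm{Ann}(S) \not\subseteq P\}$. -/
/-!
A point `P` of `Y` has `Ann S ⊄ P` iff some `x ∈ Ann S` lies outside `P`; then `x s = 0 ∈ P` forces
`S ⊆ P`, and `D(x) ∩ Y` is an open neighbourhood of `P` inside `h_Y(S)`. Conversely, an open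
neighbourhood of `P` inside `h_Y(S)` contains a basic one `D(x) ∩ Y` with `x ∉ P`. For `s ∈ S`, the
product `x s` then lies in every `Q ∈ Y` (in `x` if `Q ∉ D(x)`, in `s` otherwise), hence in
`k(Y) = 0`, so `x ∈ Ann S`.
-/

namespace PrimeSpectrum

variable {R : Type*} [CommRing R]

theorem subset_of_not_annihilator_subset {S : Set R} (P : Ideal R) [P.IsPrime]
    (h : ¬ {x : R | ∀ s ∈ S, x * s = 0} ⊆ (P : Set R)) : S ⊆ P := by
  obtain ⟨x, hx, hxP⟩ := Set.not_subset.mp h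
  intro s hs
  have hxs : x * s ∈ P := by rw [hx s hs]; exact P.zero_mem
  exact (Ideal.IsPrime.mem_or_mem ‹_› hxs).resolve_left hxP

theorem isOpen_setOf_not_subset (Y : Set (PrimeSpectrum R)) (T : Set R) :
    IsOpen {P : Y | ¬ T ⊆ ((P : PrimeSpectrum R).asIdeal : Set R)} :=
  (isClosed_zeroLocus T).isOpen_compl.preimage continuous_subtype_val

theorem exists_basicOpen_subset_of_isOpen {Y : Set (PrimeSpectrum R)} {U : Set Y}
    (hU : IsOpen U) {P : Y} (hP : P ∈ U) :
    ∃ x ∉ (P : PrimeSpectrum R).asIdeal, ∀ Q : Y, x ∉ (Q : PrimeSpectrum R).asIdeal → Q ∈ U := by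
  obtain ⟨V, hV, rfl⟩ := isOpen_induced_iff.mp hU
  obtain ⟨_, ⟨x, rfl⟩, hPx, hxV⟩ := isTopologicalBasis_basic_opens.exists_subset_of_mem_open hP hV
  exact ⟨x, hPx, fun Q hQ => hxV hQ⟩

theorem mul_eq_zero_of_forall_notMem_imp_subset {Y : Set (PrimeSpectrum R)}
    (h0 : (⨅ P ∈ Y, P.asIdeal) = ⊥) {S : Set R} {x : R}
    (hx : ∀ Q : Y, x ∉ (Q : PrimeSpectrum R).asIdeal → S ⊆ (Q : PrimeSpectrum R).asIdeal) :
    ∀ s ∈ S, x * s = 0 := by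
  intro s hs
  have hxs : x * s ∈ ⨅ P ∈ Y, P.asIdeal := by
    simp only [Submodule.mem_iInf]
    intro Q hQ
    by_cases hxQ : x ∈ Q.asIdeal
    · exact Q.asIdeal.mul_mem_right s hxQ
    · exact Q.asIdeal.mul_mem_left x (hx ⟨Q, hQ⟩ hxQ hs)
  simpa [h0] using hxs

end PrimeSpectrum

/-- if `k(Y) = ⟨0⟩`, then for every `S ⊆ R` the interior of `h_Y(S)`
in the space `Y` (with the subspace Zariski topology) is `h_Y^c(Ann S)`. -/
theorem stmt3 {R : Type*} [CommRing R] (Y : Set (PrimeSpectrum R))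
    (h0 : (⨅ P ∈ Y, P.asIdeal) = ⊥) (S : Set R) :
    interior {P : Y | S ⊆ ((P : PrimeSpectrum R).asIdeal : Set R)} =
      {P : Y | ¬ {x : R | ∀ s ∈ S, x * s = 0} ⊆
        ((P : PrimeSpectrum R).asIdeal : Set R)} := by
  apply Set.Subset.antisymm
  · intro P hP hAnn
    obtain ⟨x, hxP, hxU⟩ := PrimeSpectrum.exists_basicOpen_subset_of_isOpen isOpen_interior hP
    exact hxP (hAnn (PrimeSpectrum.mul_eq_zero_of_forall_notMem_imp_subset h0
      fun Q hxQ => interior_subset (hxU Q hxQ)))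
  · exact interior_maximal (fun P hP => PrimeSpectrum.subset_of_not_annihilator_subset _ hP)
      (PrimeSpectrum.isOpen_setOf_not_subset Y _)
end

section
/- Let $\mathrm{Min}(R)$ be the set of minimal prime ideals of $R$ and write $h_m(F) = \{P \in \mathrm{Min}(R) : F \subseteq P\}$. Then for every finite subset $F$ of $R$, $h_m(F)$ equals its own interior in the space $\mathrm{Min}(R)$; that is, $h_m(F)$ is an open subset of $\mathrm{Min}(R)$. Moreover $h_m(F) = \{P \in \mathrm{Min}(R) : (\mathrm{Rad}(R) : F) \not\subseteq P\}$, where $\mathrm{Rad}(R)$ is the intersection of all prime ideals of $R$ and $(\mathrm{Rad}(R) : F) = \{x \in R : xF \subseteq \mathrm{Rad}(R)\}$. -/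
/-!
Localizing at a minimal prime `P` leaves a ring whose only prime is the image of `P`, so every
`f ∈ P` becomes nilpotent there: some `s ∉ P` has `s * f` nilpotent. Multiplying these witnesses
over a finite `F ⊆ P` gives an element outside `P` that kills `F` modulo the nilradical, so for
minimal `P` we get `F ⊆ P` iff `(Rad R : F) ⊄ P`; and the latter condition defines the
complement of a Zariski-closed set.
-/

theorem Ideal.exists_notMem_mul_mem_nilradical_of_mem_minimalPrimes {R : Type*} [CommRing R]
    {P : Ideal R} (hP : P ∈ minimalPrimes R) {f : R} (hf : f ∈ P) :
    ∃ s ∉ P, s * f ∈ nilradical R := by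
  have := hP.1.1
  let A := Localization.AtPrime P
  have hrad := IsLocalization.AtPrime.radical_map_of_mem_minimalPrimes (A := A) P ⊥ hP
  rw [Ideal.map_bot] at hrad
  obtain ⟨n, hn⟩ : algebraMap R A f ∈ (⊥ : Ideal A).radical :=
    hrad ▸ Ideal.mem_map_of_mem _ hf
  rw [Ideal.mem_bot, ← map_pow, IsLocalization.map_eq_zero_iff P.primeCompl] at hn
  obtain ⟨⟨t, ht⟩, htf⟩ := hn
  exact ⟨t, ht, mem_nilradical.mpr ⟨n + 1, by linear_combination (t ^ n * f) * htf⟩⟩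

theorem Ideal.exists_notMem_forall_mul_mem_nilradical_of_mem_minimalPrimes {R : Type*}
    [CommRing R] {P : Ideal R} (hP : P ∈ minimalPrimes R) {F : Set R} (hF : F.Finite)
    (hFP : F ⊆ P) : ∃ s ∉ P, ∀ f ∈ F, s * f ∈ nilradical R := by
  have := hP.1.1
  induction F, hF using Set.Finite.induction_on with
  | empty => exact ⟨1, P.primeCompl.one_mem, by simp⟩
  | @insert a F _ _ ih =>
    obtain ⟨s, hsP, hs⟩ := ih ((Set.subset_insert a F).trans hFP)
    obtain ⟨t, htP, ht⟩ :=
      exists_notMem_mul_mem_nilradical_of_mem_minimalPrimes hP (hFP (Set.mem_insert a F))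
    refine ⟨s * t, P.primeCompl.mul_mem hsP htP, ?_⟩
    rintro f (rfl | hf)
    · simpa only [mul_assoc] using (nilradical R).mul_mem_left s ht
    · rw [mul_right_comm]
      exact (nilradical R).mul_mem_right t (hs f hf)

theorem Ideal.subset_of_not_colon_nilradical_subset {R : Type*} [CommRing R] {P : Ideal R}
    [P.IsPrime] {F : Set R} (h : ¬ {x : R | ∀ f ∈ F, x * f ∈ nilradical R} ⊆ P) :
    F ⊆ P := by
  obtain ⟨x, hx, hxP⟩ := Set.not_subset.mp h
  exact fun f hf => (‹P.IsPrime›.mem_or_mem (nilradical_le_prime P (hx f hf))).resolve_left hxP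

theorem Ideal.subset_iff_not_colon_nilradical_subset_of_mem_minimalPrimes {R : Type*}
    [CommRing R] {P : Ideal R} (hP : P ∈ minimalPrimes R) {F : Set R} (hF : F.Finite) :
    F ⊆ P ↔ ¬ {x : R | ∀ f ∈ F, x * f ∈ nilradical R} ⊆ P := by
  have := hP.1.1
  refine ⟨fun hFP hsub => ?_, subset_of_not_colon_nilradical_subset⟩
  obtain ⟨s, hsP, hs⟩ := exists_notMem_forall_mul_mem_nilradical_of_mem_minimalPrimes hP hF hFP
  exact hsP (hsub hs)

theorem PrimeSpectrum.isOpen_setOf_not_subset_s4 {R : Type*} [CommRing R]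
    (S : Set (PrimeSpectrum R)) (C : Set R) :
    IsOpen {P : S | ¬ C ⊆ P.1.asIdeal} :=
  (isClosed_zeroLocus C).isOpen_compl.preimage continuous_subtype_val

/-- for a finite `F ⊆ R`, the set `h_m(F)` is open (equals its interior)
in `Min(R)` with the subspace Zariski topology, and
`h_m(F) = {P ∈ Min(R) : (Rad R : F) ⊄ P}`. -/
theorem stmt4 {R : Type*} [CommRing R] (F : Set R) (hF : F.Finite) :
    ({P : {Q : PrimeSpectrum R // Q.asIdeal ∈ minimalPrimes R} |
        F ⊆ (P.1.asIdeal : Set R)} =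
      interior {P : {Q : PrimeSpectrum R // Q.asIdeal ∈ minimalPrimes R} |
        F ⊆ (P.1.asIdeal : Set R)}) ∧
    ({P : {Q : PrimeSpectrum R // Q.asIdeal ∈ minimalPrimes R} |
        F ⊆ (P.1.asIdeal : Set R)} =
      {P : {Q : PrimeSpectrum R // Q.asIdeal ∈ minimalPrimes R} |
        ¬ {x : R | ∀ f ∈ F, x * f ∈ nilradical R} ⊆ (P.1.asIdeal : Set R)}) := by
  have heq : {P : {Q : PrimeSpectrum R // Q.asIdeal ∈ minimalPrimes R} |
        F ⊆ (P.1.asIdeal : Set R)} =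
      {P : {Q : PrimeSpectrum R // Q.asIdeal ∈ minimalPrimes R} |
        ¬ {x : R | ∀ f ∈ F, x * f ∈ nilradical R} ⊆ (P.1.asIdeal : Set R)} :=
    Set.ext fun P => Ideal.subset_iff_not_colon_nilradical_subset_of_mem_minimalPrimes P.2 hF
  refine ⟨?_, heq⟩
  rw [heq]
  exact (PrimeSpectrum.isOpen_setOf_not_subset_s4 _ _).interior_eq.symm
end

section
/- The following are equivalent: (a) $k(Y) = \mathrm{Rad}(R)$, where $\mathrm{Rad}(R)$ is the intersection of all prime ideals of $R$; (b) every $\mathcal{H}_{\mathrm{Min}(R)}$-ideal of $R$ (i.e. $z^{\circ}$-ideal) is an $\mathcal{H}_Y$-ideal; (c) every strong $\mathcal{H}_{\mathrm{Min}(R)}$-ideal of $R$ (i.e. $sz^{\circ}$-ideal) is a strong $\mathcal{H}_Y$-ideal; (d) $k(h_Y(F)) \subseteq k(h_m(F))$ for every finite subset $F$ of $R$; (e) $k(h_Y(a)) \subseteq k(h_m(a))$ for every $a \in R$. -/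
/-!
Both kinds of `ℋ_Y`-ideal can be phrased as closure conditions: `I` is a (strong) `ℋ_Y`-ideal
iff `k(h_Y(F)) ⊆ I` for all finite (one-element) `F ⊆ I`. Since `k(h_m(F)) ⊆ I` for every
(strong) `z°`-ideal `I ⊇ F`, (d) and (e) give (c) and (b). Conversely the nilradical is a
strong `z°`-ideal, and testing (b) or (c) on it with `F = {0}` or `F = ∅` yields
`k(Y) ⊆ Rad(R)`.

The substantial step is (a) ⇒ (d). If `P` is a minimal prime containing the finite set `F`,
each `f ∈ F` has some `s_f ∉ P` with `s_f f^n` nilpotent, since otherwise the multiplicative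
set `(R ∖ P) · fᴺ` avoids the nilradical and yields a prime strictly below `P`. The product
`t` of the `s_f` lies outside `P` but in every prime not containing `F`. Hence for
`b ∈ k(h_Y(F))`, `t b ∈ k(Y) = Rad(R) ⊆ P`, so `b ∈ P`.
-/

section

variable {R : Type*} [CommRing R] {Y : Set (Ideal R)}

lemma mem_kSet_iff {𝒮 : Set (Ideal R)} {x : R} : x ∈ kSet 𝒮 ↔ ∀ P ∈ 𝒮, x ∈ P :=
  Submodule.mem_sInf

lemma hSet_subset_hSet_singleton_iff {F : Set R} {b : R} :
    hSet Y F ⊆ hSet Y {b} ↔ b ∈ kSet (hSet Y F) := by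
  refine ⟨fun h => mem_kSet_iff.mpr fun P hP => (h hP).2 rfl, fun h P hP => ?_⟩
  exact ⟨hP.1, Set.singleton_subset_iff.mpr (mem_kSet_iff.mp h P hP)⟩

lemma isStrongHIdeal_iff {I : Ideal R} :
    IsStrongHIdeal Y I ↔
      ∀ F : Set R, F.Finite → F ⊆ (I : Set R) → kSet (hSet Y F) ≤ I := by
  simp only [IsStrongHIdeal, hSet_subset_hSet_singleton_iff, SetLike.le_def]

lemma isHIdeal_iff {I : Ideal R} : IsHIdeal Y I ↔ ∀ a ∈ I, kSet (hSet Y {a}) ≤ I := by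
  simp only [IsHIdeal, hSet_subset_hSet_singleton_iff, SetLike.le_def]

lemma hSet_empty : hSet Y ∅ = Y := by
  simp [hSet]

lemma hSet_zero : hSet Y {0} = Y := by
  simp [hSet]

lemma nilradical_le_kSet (hprime : ∀ P ∈ Y, P.IsPrime) : nilradical R ≤ kSet Y :=
  fun _ hx => mem_kSet_iff.mpr fun P hP => nilradical_le_prime (H := hprime P hP) P hx

lemma kSet_minimalPrimes : kSet (minimalPrimes R) = nilradical R := by
  rw [kSet, minimalPrimes, Ideal.sInf_minimalPrimes]
  rfl

lemma isStrongHIdeal_nilradical : IsStrongHIdeal (minimalPrimes R) (nilradical R) := by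
  refine isStrongHIdeal_iff.mpr fun F _ hF => ?_
  have : hSet (minimalPrimes R) F = minimalPrimes R :=
    Set.sep_eq_self_iff_mem_true.mpr fun P hP =>
      hF.trans (nilradical_le_prime (H := hP.1.1) P)
  rw [this, kSet_minimalPrimes]

lemma isHIdeal_nilradical : IsHIdeal (minimalPrimes R) (nilradical R) :=
  isHIdeal_iff.mpr fun a ha =>
    isStrongHIdeal_iff.mp isStrongHIdeal_nilradical {a} (Set.finite_singleton a)
      (Set.singleton_subset_iff.mpr ha)

lemma exists_notMem_mul_pow_mem_nilradical_of_mem_minimalPrimes {P : Ideal R}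
    (hP : P ∈ minimalPrimes R) {a : R} (ha : a ∈ P) :
    ∃ s ∉ P, ∃ n : ℕ, s * a ^ n ∈ nilradical R := by
  have hPp : P.IsPrime := hP.1.1
  have one_notMem : (1 : R) ∉ P := P.ne_top_iff_one.mp hPp.ne_top
  by_contra! h
  let M : Submonoid R :=
    { carrier := {x | ∃ s ∉ P, ∃ n : ℕ, x = s * a ^ n}
      one_mem' := ⟨1, one_notMem, 0, by ring⟩
      mul_mem' := by
        rintro x y ⟨s, hs, n, rfl⟩ ⟨t, ht, m, rfl⟩
        exact ⟨s * t, fun hst => (hPp.mem_or_mem hst).elim hs ht, n + m, by ring⟩ }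
  have hdisj : Disjoint (nilradical R : Set R) M := by
    rw [Set.disjoint_left]
    rintro x hx ⟨s, hs, n, rfl⟩
    exact h s hs n hx
  obtain ⟨p, hp, -, hpM⟩ := Ideal.exists_le_prime_disjoint (nilradical R) M hdisj
  have hpP : p ≤ P := fun x hxp => by
    by_contra hxP
    exact Set.disjoint_left.mp hpM hxp ⟨x, hxP, 0, by ring⟩
  have hap : a ∉ p := fun hap =>
    Set.disjoint_left.mp hpM hap ⟨1, one_notMem, 1, by ring⟩
  exact hap (hP.2 ⟨hp, bot_le⟩ hpP ha)

lemma exists_notMem_forall_mem_of_not_subset {P : Ideal R} (hP : P ∈ minimalPrimes R)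
    {F : Set R} (hF : F.Finite) (hFP : F ⊆ P) :
    ∃ t ∉ P, ∀ Q : Ideal R, Q.IsPrime → ¬ F ⊆ Q → t ∈ Q := by
  induction F, hF using Set.Finite.induction_on with
  | empty =>
    exact ⟨1, P.ne_top_iff_one.mp hP.1.1.ne_top, fun Q _ h => (h (Set.empty_subset _)).elim⟩
  | @insert a F _ _ ih =>
    obtain ⟨t, ht, htQ⟩ := ih ((Set.subset_insert a F).trans hFP)
    obtain ⟨s, hs, n, hsa⟩ :=
      exists_notMem_mul_pow_mem_nilradical_of_mem_minimalPrimes hP (hFP (Set.mem_insert a F))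
    refine ⟨s * t, fun hst => (hP.1.1.mem_or_mem hst).elim hs ht, fun Q hQ hFQ => ?_⟩
    rw [Set.insert_subset_iff, not_and_or] at hFQ
    rcases hFQ with haQ | hFQ
    · have hsaQ := nilradical_le_prime (H := hQ) Q hsa
      exact Q.mul_mem_right t <|
        (hQ.mem_or_mem hsaQ).resolve_right fun h => haQ (hQ.mem_of_pow_mem n h)
    · exact Q.mul_mem_left s (htQ Q hQ hFQ)

lemma kSet_hSet_le_kSet_hSet_minimalPrimes (hprime : ∀ P ∈ Y, P.IsPrime)
    (hY : kSet Y ≤ nilradical R) {F : Set R} (hF : F.Finite) :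
    kSet (hSet Y F) ≤ kSet (hSet (minimalPrimes R) F) := by
  intro b hb
  refine mem_kSet_iff.mpr fun P ⟨hPmin, hFP⟩ => ?_
  obtain ⟨t, ht, htQ⟩ := exists_notMem_forall_mem_of_not_subset hPmin hF hFP
  have htb : t * b ∈ kSet Y := mem_kSet_iff.mpr fun Q hQ => by
    by_cases hFQ : F ⊆ Q
    · exact Q.mul_mem_left t (mem_kSet_iff.mp hb Q ⟨hQ, hFQ⟩)
    · exact Q.mul_mem_right b (htQ Q (hprime Q hQ) hFQ)
  have hPp : P.IsPrime := hPmin.1.1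
  exact (hPp.mem_or_mem (nilradical_le_prime P (hY htb))).resolve_left ht

end

/-- `k(Y) = Rad(R)` iff every `z°`-ideal is an `ℋ_Y`-ideal, iff every
`sz°`-ideal is a strong `ℋ_Y`-ideal, iff `k(h_Y(F)) ⊆ k(h_m(F))` for finite `F`,
iff `k(h_Y(a)) ⊆ k(h_m(a))` for all `a`. -/
theorem stmt5 {R : Type*} [CommRing R] (Y : Set (Ideal R))
    (hprime : ∀ P ∈ Y, P.IsPrime) :
    [ kSet Y = nilradical R,
      (∀ I : Ideal R, IsHIdeal (minimalPrimes R) I → IsHIdeal Y I),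
      (∀ I : Ideal R, IsStrongHIdeal (minimalPrimes R) I → IsStrongHIdeal Y I),
      (∀ F : Set R, F.Finite →
        kSet (hSet Y F) ≤ kSet (hSet (minimalPrimes R) F)),
      (∀ a : R, kSet (hSet Y {a}) ≤ kSet (hSet (minimalPrimes R) {a})) ].TFAE := by
  tfae_have 1 → 4 := fun h1 _ =>
    kSet_hSet_le_kSet_hSet_minimalPrimes hprime h1.le
  tfae_have 4 → 5 := fun h4 a => h4 {a} (Set.finite_singleton a)
  tfae_have 4 → 3 := fun h4 I hI => isStrongHIdeal_iff.mpr fun F hF hFI =>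
    (h4 F hF).trans (isStrongHIdeal_iff.mp hI F hF hFI)
  tfae_have 5 → 2 := fun h5 I hI => isHIdeal_iff.mpr fun a ha =>
    (h5 a).trans (isHIdeal_iff.mp hI a ha)
  tfae_have 3 → 1 := fun h3 => le_antisymm
    (hSet_empty (Y := Y) ▸ isStrongHIdeal_iff.mp (h3 _ isStrongHIdeal_nilradical) ∅
      Set.finite_empty (Set.empty_subset _))
    (nilradical_le_kSet hprime)
  tfae_have 2 → 1 := fun h2 => le_antisymm
    (hSet_zero (Y := Y) ▸ isHIdeal_iff.mp (h2 _ isHIdeal_nilradical) 0 (zero_mem _))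
    (nilradical_le_kSet hprime)
  tfae_finish
end

section
/- Let $I$ be an ideal of $R$ and let $P$ be a prime ideal minimal over $I$. If $I$ is an $\mathcal{H}_Y$-ideal, then $P$ is an $\mathcal{H}_Y$-ideal; if $I$ is a strong $\mathcal{H}_Y$-ideal, then $P$ is a strong $\mathcal{H}_Y$-ideal. -/
namespace Ideal

variable {R : Type*} [CommRing R] {I P : Ideal R}

theorem exists_mul_pow_mem_of_mem_minimalPrimes (hP : P ∈ I.minimalPrimes) {a : R}
    (ha : a ∈ P) : ∃ c ∉ P, ∃ n : ℕ, c * a ^ n ∈ I := by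
  have := hP.1.1
  by_contra! h
  have hdisj : Disjoint (I : Set R) (P.primeCompl ⊔ Submonoid.powers a : Submonoid R) := by
    refine Set.disjoint_left.2 fun x hxI hx => ?_
    obtain ⟨c, hc, _, ⟨n, rfl⟩, rfl⟩ := Submonoid.mem_sup.1 hx
    exact h c hc n hxI
  obtain ⟨Q, hQ, hIQ, hQS⟩ := exists_le_prime_disjoint I _ hdisj
  have hQP : Q ≤ P := fun x hxQ => by
    by_contra hxP
    exact Set.disjoint_left.1 hQS hxQ (Submonoid.mem_sup_left (show x ∈ P.primeCompl from hxP))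
  have hPQ : P ≤ Q := hP.2 ⟨hQ, hIQ⟩ hQP
  exact Set.disjoint_left.1 hQS (hPQ ha) (Submonoid.mem_sup_right (Submonoid.mem_powers a))

theorem exists_forall_mul_pow_mem_of_mem_minimalPrimes (hP : P ∈ I.minimalPrimes) {F : Set R}
    (hF : F.Finite) (hFP : F ⊆ P) : ∃ c ∉ P, ∃ n : ℕ, ∀ a ∈ F, c * a ^ n ∈ I := by
  induction F, hF using Set.Finite.induction_on with
  | empty => exact ⟨1, P.ne_top_iff_one.1 hP.1.1.ne_top, 0, by simp⟩
  | @insert a F _ _ ih =>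
    obtain ⟨c, hc, n, hcn⟩ := ih ((Set.subset_insert a F).trans hFP)
    obtain ⟨d, hd, m, hdm⟩ := exists_mul_pow_mem_of_mem_minimalPrimes hP (hFP (Set.mem_insert a F))
    refine ⟨d * c, fun h => (hP.1.1.mem_or_mem h).elim hd hc, m + n, ?_⟩
    have hmul : ∀ x, d * c * x ^ (m + n) = (d * x ^ m) * (c * x ^ n) := fun x => by ring
    rintro x (rfl | hx)
    · exact hmul x ▸ I.mul_mem_right _ hdm
    · exact hmul x ▸ I.mul_mem_left _ (hcn x hx)

end Ideal

section hSet

variable {R : Type*} [CommRing R] {Y : Set (Ideal R)}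

theorem hSet_image_mul_pow_subset (hY : ∀ Q ∈ Y, Q.IsPrime) (c : R) (n : ℕ) (F : Set R) :
    hSet Y ((fun a => c * a ^ n) '' F) ⊆ hSet Y {c} ∪ hSet Y F := by
  rintro Q ⟨hQY, hQ⟩
  by_cases hc : c ∈ Q
  · exact Or.inl ⟨hQY, Set.singleton_subset_iff.2 hc⟩
  · refine Or.inr ⟨hQY, fun a ha => ?_⟩
    have hcan : c * a ^ n ∈ Q := hQ ⟨a, ha, rfl⟩
    exact (hY Q hQY).mem_of_pow_mem n (((hY Q hQY).mem_or_mem hcan).resolve_left hc)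

theorem hSet_union_subset_hSet_mul (c b : R) : hSet Y {c} ∪ hSet Y {b} ⊆ hSet Y {c * b} := by
  rintro Q (⟨hQY, hc⟩ | ⟨hQY, hb⟩)
  · exact ⟨hQY, Set.singleton_subset_iff.2 (Q.mul_mem_right b (Set.singleton_subset_iff.1 hc))⟩
  · exact ⟨hQY, Set.singleton_subset_iff.2 (Q.mul_mem_left c (Set.singleton_subset_iff.1 hb))⟩

theorem exists_image_mul_pow_subset_of_hSet_subset (hY : ∀ Q ∈ Y, Q.IsPrime) {I P : Ideal R}
    (hP : P ∈ I.minimalPrimes) {F : Set R} (hF : F.Finite) (hFP : F ⊆ P) {b : R}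
    (hFb : hSet Y F ⊆ hSet Y {b}) :
    ∃ c ∉ P, ∃ n : ℕ, (fun a => c * a ^ n) '' F ⊆ I ∧
      hSet Y ((fun a => c * a ^ n) '' F) ⊆ hSet Y {c * b} := by
  obtain ⟨c, hc, n, hcn⟩ := Ideal.exists_forall_mul_pow_mem_of_mem_minimalPrimes hP hF hFP
  refine ⟨c, hc, n, Set.image_subset_iff.2 hcn, ?_⟩
  calc hSet Y ((fun a => c * a ^ n) '' F) ⊆ hSet Y {c} ∪ hSet Y F :=
        hSet_image_mul_pow_subset hY c n F
    _ ⊆ hSet Y {c} ∪ hSet Y {b} := Set.union_subset_union_right _ hFb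
    _ ⊆ hSet Y {c * b} := hSet_union_subset_hSet_mul c b

end hSet

/-- a prime ideal minimal over a (strong) `ℋ_Y`-ideal is a (strong)
`ℋ_Y`-ideal. -/
theorem stmt7 {R : Type*} [CommRing R] (Y : Set (Ideal R))
    (hprime : ∀ P ∈ Y, P.IsPrime) (I P : Ideal R) (hP : P.IsPrime) (hIP : I ≤ P)
    (hmin : ∀ Q : Ideal R, Q.IsPrime → I ≤ Q → Q ≤ P → Q = P) :
    (IsHIdeal Y I → IsHIdeal Y P) ∧
    (IsStrongHIdeal Y I → IsStrongHIdeal Y P) := by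
  have hPmin : P ∈ I.minimalPrimes :=
    ⟨⟨hP, hIP⟩, fun Q ⟨hQ, hIQ⟩ hQP => (hmin Q hQ hIQ hQP).ge⟩
  constructor
  · intro hI a ha b hab
    obtain ⟨c, hc, n, hGI, hGb⟩ := exists_image_mul_pow_subset_of_hSet_subset hprime hPmin
      (Set.finite_singleton a) (Set.singleton_subset_iff.2 ha) hab
    rw [Set.image_singleton] at hGI hGb
    exact (hP.mem_or_mem (hIP (hI _ (hGI rfl) _ hGb))).resolve_left hc
  · intro hI F hF hFP b hFb
    obtain ⟨c, hc, n, hGI, hGb⟩ :=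
      exists_image_mul_pow_subset_of_hSet_subset hprime hPmin hF hFP hFb
    exact (hP.mem_or_mem (hIP (hI _ (hF.image _) hGI _ hGb))).resolve_left hc
end

section
/- For ideals $I$ and $J$ of $R$, $(IJ)_{S\mathcal{H}} = I_{S\mathcal{H}} \cap J_{S\mathcal{H}} = (I \cap J)_{S\mathcal{H}}$, where $K_{S\mathcal{H}}$ denotes the smallest strong $\mathcal{H}_Y$-ideal containing the ideal $K$; the analogous equalities $(IJ)_{\mathcal{H}} = I_{\mathcal{H}} \cap J_{\mathcal{H}} = (I \cap J)_{\mathcal{H}}$ hold, where $K_{\mathcal{H}}$ denotes the smallest $\mathcal{H}_Y$-ideal containing $K$. -/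
/-- The smallest strong `ℋ_Y`-ideal containing `K`. -/
def strongHClosure {R : Type*} [CommRing R] (Y : Set (Ideal R)) (K : Ideal R) :
    Ideal R :=
  sInf {J : Ideal R | IsStrongHIdeal Y J ∧ K ≤ J}

/-- The smallest `ℋ_Y`-ideal containing `K`. -/
def hClosure {R : Type*} [CommRing R] (Y : Set (Ideal R)) (K : Ideal R) : Ideal R :=
  sInf {J : Ideal R | IsHIdeal Y J ∧ K ≤ J}

/-!
Both closures are instances of `K ↦ ⋂ {L | P L, K ≤ L}` for a class `P` of ideals that is stable
under colons `L : S` and consists of radical ideals. For such `P`, if `IJ ≤ L` with `P L` then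
`I ≤ L : J`, hence `cl I ≤ L : J`, and again `cl J ≤ L : cl I`; so `cl I * cl J ≤ L` and, `L` being
radical, `cl I ⊓ cl J ≤ L`. This gives `cl (IJ) = cl I ⊓ cl J`, and `cl (I ⊓ J)` is squeezed in
between.

When `Y` consists of primes, (strong) `ℋ_Y`-ideals form such a class: a prime containing all `a p`
either contains `p` or all `a`, which transfers `h_Y(F) ⊆ h_Y(b)` to `h_Y(F p) ⊆ h_Y(b p)`; and
`h_Y(xⁿ) = h_Y(x)`.
-/

section ColonStable

variable {R : Type*} [CommRing R]

theorem le_colon_iff_mul_le {I J L : Ideal R} : I ≤ L.colon (J : Set R) ↔ I * J ≤ L := by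
  rw [Ideal.mul_le]
  simp only [SetLike.le_def, Submodule.mem_colon, SetLike.mem_coe, smul_eq_mul]

def idealClosure (P : Ideal R → Prop) (K : Ideal R) : Ideal R :=
  sInf {L | P L ∧ K ≤ L}

variable {P : Ideal R → Prop}

theorem idealClosure_le {K L : Ideal R} (hL : P L) (hKL : K ≤ L) : idealClosure P K ≤ L :=
  sInf_le ⟨hL, hKL⟩

theorem idealClosure_mono {K K' : Ideal R} (h : K ≤ K') : idealClosure P K ≤ idealClosure P K' :=
  sInf_le_sInf fun _ hL => ⟨hL.1, h.trans hL.2⟩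

theorem idealClosure_mul_idealClosure_le (colon : ∀ L (S : Set R), P L → P (L.colon S))
    {I J L : Ideal R} (hL : P L) (h : I * J ≤ L) : idealClosure P I * idealClosure P J ≤ L := by
  have hI : idealClosure P I ≤ L.colon (J : Set R) :=
    idealClosure_le (colon L _ hL) (le_colon_iff_mul_le.2 h)
  have hJ : idealClosure P J ≤ L.colon (idealClosure P I : Set R) := by
    refine idealClosure_le (colon L _ hL) (le_colon_iff_mul_le.2 ?_)
    rw [mul_comm]
    exact le_colon_iff_mul_le.1 hI
  rw [mul_comm]
  exact le_colon_iff_mul_le.1 hJ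

theorem inf_idealClosure_le (colon : ∀ L (S : Set R), P L → P (L.colon S))
    (radical : ∀ L, P L → L.IsRadical) {I J L : Ideal R} (hL : P L) (h : I * J ≤ L) :
    idealClosure P I ⊓ idealClosure P J ≤ L :=
  calc idealClosure P I ⊓ idealClosure P J
      ≤ (idealClosure P I).radical ⊓ (idealClosure P J).radical :=
        inf_le_inf Ideal.le_radical Ideal.le_radical
    _ = (idealClosure P I * idealClosure P J).radical := (Ideal.radical_mul _ _).symm
    _ ≤ L := (radical L hL).radical_le_iff.2 (idealClosure_mul_idealClosure_le colon hL h)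

theorem idealClosure_mul (colon : ∀ L (S : Set R), P L → P (L.colon S))
    (radical : ∀ L, P L → L.IsRadical) (I J : Ideal R) :
    idealClosure P (I * J) = idealClosure P I ⊓ idealClosure P J :=
  le_antisymm (le_inf (idealClosure_mono Ideal.mul_le_left) (idealClosure_mono Ideal.mul_le_right))
    (le_sInf fun _ hL => inf_idealClosure_le colon radical hL.1 hL.2)

theorem idealClosure_inf (colon : ∀ L (S : Set R), P L → P (L.colon S))
    (radical : ∀ L, P L → L.IsRadical) (I J : Ideal R) :
    idealClosure P (I ⊓ J) = idealClosure P I ⊓ idealClosure P J :=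
  le_antisymm (le_inf (idealClosure_mono inf_le_left) (idealClosure_mono inf_le_right))
    (idealClosure_mul colon radical I J ▸ idealClosure_mono Ideal.mul_le_inf)

end ColonStable

section HIdeal

variable {R : Type*} [CommRing R] {Y : Set (Ideal R)}

theorem hSet_image_mul_right_subset (hprime : ∀ P ∈ Y, P.IsPrime) {F : Set R} {b : R}
    (h : hSet Y F ⊆ hSet Y {b}) (p : R) : hSet Y ((· * p) '' F) ⊆ hSet Y {b * p} := by
  rintro P ⟨hPY, hFp⟩
  refine ⟨hPY, Set.singleton_subset_iff.2 ?_⟩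
  by_cases hp : p ∈ P
  · exact P.mul_mem_left b hp
  · have hF : F ⊆ P := fun x hx =>
      ((hprime P hPY).mem_or_mem (hFp ⟨x, hx, rfl⟩)).resolve_right hp
    exact P.mul_mem_right p (Set.singleton_subset_iff.1 (h ⟨hPY, hF⟩).2)

theorem IsHIdeal.colon (hprime : ∀ P ∈ Y, P.IsPrime) {L : Ideal R} (hL : IsHIdeal Y L)
    (S : Set R) : IsHIdeal Y (L.colon S) := by
  intro a ha b hab
  refine Submodule.mem_colon.2 fun p hp => hL (a * p) (Submodule.mem_colon.1 ha p hp) (b * p) ?_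
  simpa only [Set.image_singleton] using hSet_image_mul_right_subset hprime hab p

theorem IsStrongHIdeal.colon (hprime : ∀ P ∈ Y, P.IsPrime) {L : Ideal R}
    (hL : IsStrongHIdeal Y L) (S : Set R) : IsStrongHIdeal Y (L.colon S) := by
  intro F hF hFL b hbF
  refine Submodule.mem_colon.2 fun p hp =>
    hL _ (hF.image _) ?_ (b * p) (hSet_image_mul_right_subset hprime hbF p)
  rintro _ ⟨x, hx, rfl⟩
  exact Submodule.mem_colon.1 (hFL hx) p hp

theorem IsStrongHIdeal.isHIdeal {L : Ideal R} (hL : IsStrongHIdeal Y L) : IsHIdeal Y L :=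
  fun a ha => hL {a} (Set.finite_singleton a) (Set.singleton_subset_iff.2 ha)

theorem IsHIdeal.isRadical (hprime : ∀ P ∈ Y, P.IsPrime) {L : Ideal R} (hL : IsHIdeal Y L) :
    L.IsRadical := by
  rintro x ⟨n, hxn⟩
  refine hL (x ^ n) hxn x fun P ⟨hPY, hP⟩ => ⟨hPY, ?_⟩
  exact Set.singleton_subset_iff.2
    ((hprime P hPY).mem_of_pow_mem n (Set.singleton_subset_iff.1 hP))

end HIdeal

/-- `(IJ)_{Sℋ} = I_{Sℋ} ∩ J_{Sℋ} = (I ∩ J)_{Sℋ}` and likewise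
`(IJ)_ℋ = I_ℋ ∩ J_ℋ = (I ∩ J)_ℋ`. -/
theorem stmt11 {R : Type*} [CommRing R] (Y : Set (Ideal R))
    (hprime : ∀ P ∈ Y, P.IsPrime) (I J : Ideal R) :
    strongHClosure Y (I * J) = strongHClosure Y I ⊓ strongHClosure Y J ∧
    strongHClosure Y I ⊓ strongHClosure Y J = strongHClosure Y (I ⊓ J) ∧
    hClosure Y (I * J) = hClosure Y I ⊓ hClosure Y J ∧
    hClosure Y I ⊓ hClosure Y J = hClosure Y (I ⊓ J) := by
  have strong_colon L S (hL : IsStrongHIdeal Y L) := hL.colon hprime S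
  have strong_radical L (hL : IsStrongHIdeal Y L) := hL.isHIdeal.isRadical hprime
  have h_colon L S (hL : IsHIdeal Y L) := hL.colon hprime S
  have h_radical L (hL : IsHIdeal Y L) := hL.isRadical hprime
  exact ⟨idealClosure_mul strong_colon strong_radical I J,
    (idealClosure_inf strong_colon strong_radical I J).symm,
    idealClosure_mul h_colon h_radical I J, (idealClosure_inf h_colon h_radical I J).symm⟩
end

section
/- Let $A$ be a multiplicatively closed subset of $R$ and $I$ an ideal of $R$ with $A \cap I = \emptyset$. If $I$ is a strong $\mathcal{H}_Y$-ideal, then the ideal $I_A = \{r \in R : ra \in I \text{ for some } a \in A\}$ is a proper strong $\mathcal{H}_Y$-ideal of $R$; likewise, if $I$ is an $\mathcal{H}_Y$-ideal then $I_A$ is a proper $\mathcal{H}_Y$-ideal. -/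
/-!
Multiplying by a common element `a ∈ A` moves the question into `I`: every finite subset `F` of
`I_A` satisfies `F a ⊆ I` for one `a ∈ A`, and since the members of `Y` are prime, a prime
containing `F a` either contains `a` or contains `F`, so `h_Y(F) ⊆ h_Y(b)` gives
`h_Y(F a) ⊆ h_Y(b a)`.
-/

namespace Ideal

variable {R : Type*} [CommRing R]

def saturation (M : Submonoid R) (I : Ideal R) : Ideal R where
  carrier := {r | ∃ a ∈ M, r * a ∈ I}
  zero_mem' := ⟨1, M.one_mem, by simp⟩
  add_mem' := by
    rintro x y ⟨a, ha, hxa⟩ ⟨b, hb, hyb⟩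
    refine ⟨a * b, M.mul_mem ha hb, ?_⟩
    rw [add_mul, ← mul_assoc, mul_left_comm y]
    exact I.add_mem (I.mul_mem_right b hxa) (I.mul_mem_left a hyb)
  smul_mem' := by
    rintro c x ⟨a, ha, hxa⟩
    exact ⟨a, ha, by simpa only [smul_eq_mul, mul_assoc] using I.mul_mem_left c hxa⟩

variable {M : Submonoid R} {I : Ideal R}

theorem saturation_ne_top (h : ∀ a ∈ M, a ∉ I) : I.saturation M ≠ ⊤ := by
  rw [Ne, eq_top_iff_one]
  rintro ⟨a, ha, h1a⟩
  exact h a ha (by rwa [one_mul] at h1a)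

theorem exists_forall_mul_mem_of_subset_saturation {F : Set R} (hF : F.Finite)
    (hFI : F ⊆ I.saturation M) : ∃ a ∈ M, ∀ f ∈ F, f * a ∈ I := by
  induction F, hF using Set.Finite.induction_on with
  | empty => exact ⟨1, M.one_mem, by simp⟩
  | @insert x F _ _ ih =>
    obtain ⟨a, ha, hxa⟩ := hFI (Set.mem_insert x F)
    obtain ⟨b, hb, hFb⟩ := ih ((Set.subset_insert x F).trans hFI)
    refine ⟨a * b, M.mul_mem ha hb, ?_⟩
    rintro f (rfl | hf)
    · rw [← mul_assoc]
      exact I.mul_mem_right b hxa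
    · rw [mul_comm a b, ← mul_assoc]
      exact I.mul_mem_right a (hFb f hf)

end Ideal

theorem hSet_image_mul_subset {R : Type*} [CommRing R] {Y : Set (Ideal R)}
    (hY : ∀ P ∈ Y, P.IsPrime) {S T : Set R} (h : hSet Y S ⊆ hSet Y T) (a : R) :
    hSet Y ((· * a) '' S) ⊆ hSet Y ((· * a) '' T) := by
  rintro P ⟨hPY, hSP⟩
  refine ⟨hPY, ?_⟩
  rintro _ ⟨t, ht, rfl⟩
  by_cases haP : a ∈ P
  · exact P.mul_mem_left t haP
  · have hSP' : S ⊆ P := fun s hs =>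
      ((hY P hPY).mem_or_mem (hSP ⟨s, hs, rfl⟩)).resolve_right haP
    exact P.mul_mem_right a ((h ⟨hPY, hSP'⟩).2 ht)

section

variable {R : Type*} [CommRing R] {Y : Set (Ideal R)} {I : Ideal R}

theorem IsStrongHIdeal.saturation (hY : ∀ P ∈ Y, P.IsPrime) (hI : IsStrongHIdeal Y I)
    (M : Submonoid R) : IsStrongHIdeal Y (I.saturation M) := by
  intro F hF hFI b hb
  obtain ⟨a, ha, hFa⟩ := Ideal.exists_forall_mul_mem_of_subset_saturation hF hFI
  refine ⟨a, ha, hI _ (hF.image (· * a)) ?_ (b * a) ?_⟩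
  · rintro _ ⟨f, hf, rfl⟩
    exact hFa f hf
  · simpa only [Set.image_singleton] using hSet_image_mul_subset hY hb a

theorem IsHIdeal.saturation (hY : ∀ P ∈ Y, P.IsPrime) (hI : IsHIdeal Y I)
    (M : Submonoid R) : IsHIdeal Y (I.saturation M) := by
  rintro x ⟨a, ha, hxa⟩ b hb
  refine ⟨a, ha, hI (x * a) hxa (b * a) ?_⟩
  simpa only [Set.image_singleton] using hSet_image_mul_subset hY hb a

end

/-- for a multiplicatively closed `A` disjoint from a (strong)
`ℋ_Y`-ideal `I`, the saturation `I_A = {r : ra ∈ I for some a ∈ A}` is a proper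
(strong) `ℋ_Y`-ideal. -/
theorem stmt13 {R : Type*} [CommRing R] (Y : Set (Ideal R))
    (hprime : ∀ P ∈ Y, P.IsPrime) (A : Set R)
    (hone : (1 : R) ∈ A) (hmul : ∀ a ∈ A, ∀ b ∈ A, a * b ∈ A)
    (I : Ideal R) (hdisj : ∀ a ∈ A, a ∉ I) :
    (IsStrongHIdeal Y I → ∃ K : Ideal R,
      (K : Set R) = {r : R | ∃ a ∈ A, r * a ∈ I} ∧ K ≠ ⊤ ∧ IsStrongHIdeal Y K) ∧
    (IsHIdeal Y I → ∃ K : Ideal R,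
      (K : Set R) = {r : R | ∃ a ∈ A, r * a ∈ I} ∧ K ≠ ⊤ ∧ IsHIdeal Y K) := by
  let M : Submonoid R :=
    { carrier := A, one_mem' := hone, mul_mem' := fun ha hb => hmul _ ha _ hb }
  have hproper : I.saturation M ≠ ⊤ := Ideal.saturation_ne_top hdisj
  exact ⟨fun hI => ⟨I.saturation M, rfl, hproper, hI.saturation hprime M⟩,
    fun hI => ⟨I.saturation M, rfl, hproper, hI.saturation hprime M⟩⟩
end

section
/- Let $f : R \to R'$ be a homomorphism of commutative rings, let $X$ be a set of prime ideals of $R$ and $Y$ a set of prime ideals of $R'$. Then every strong $\mathcal{H}_Y$-ideal $J$ of $R'$ has contraction $f^{-1}(J)$ a strong $\mathcal{H}_X$-ideal of $R$ if and only if for every $P \in Y$ the contraction $f^{-1}(P)$ is a strong $\mathcal{H}_X$-ideal of $R$. The analogous equivalence holds with '$\mathcal{H}$-ideal' in place of 'strong $\mathcal{H}$-ideal' throughout. -/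
section

variable {R R' : Type*} [CommRing R] [CommRing R']

theorem isStrongHIdeal_of_mem {Y : Set (Ideal R)} {P : Ideal R} (hP : P ∈ Y) :
    IsStrongHIdeal Y P :=
  fun _ _ hF _ hb => Set.singleton_subset_iff.1 (hb ⟨hP, hF⟩).2

theorem isHIdeal_of_mem {Y : Set (Ideal R)} {P : Ideal R} (hP : P ∈ Y) : IsHIdeal Y P :=
  fun _ ha _ hb => Set.singleton_subset_iff.1 (hb ⟨hP, Set.singleton_subset_iff.2 ha⟩).2

/- The primes `Q ∈ Y` containing `f '' F` are those with `F ⊆ f⁻¹(Q)`, and for these the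
hypothesis on `f⁻¹(Q)` puts `f b` into `Q`. -/
theorem IsStrongHIdeal.comap (f : R →+* R') {X : Set (Ideal R)} {Y : Set (Ideal R')}
    {J : Ideal R'} (hJ : IsStrongHIdeal Y J) (hY : ∀ P ∈ Y, IsStrongHIdeal X (P.comap f)) :
    IsStrongHIdeal X (J.comap f) := by
  intro F hF hFJ b hb
  refine hJ (f '' F) (hF.image f) (Set.image_subset_iff.2 hFJ) (f b) ?_
  rintro Q ⟨hQ, hFQ⟩
  have hF_comap : F ⊆ f ⁻¹' Q := Set.image_subset_iff.1 hFQ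
  exact ⟨hQ, Set.singleton_subset_iff.2 (hY Q hQ F hF hF_comap b hb)⟩

theorem IsHIdeal.comap (f : R →+* R') {X : Set (Ideal R)} {Y : Set (Ideal R')}
    {J : Ideal R'} (hJ : IsHIdeal Y J) (hY : ∀ P ∈ Y, IsHIdeal X (P.comap f)) :
    IsHIdeal X (J.comap f) := by
  intro a ha b hb
  refine hJ (f a) ha (f b) ?_
  rintro Q ⟨hQ, haQ⟩
  have ha_comap : a ∈ Q.comap f := Ideal.mem_comap.2 (Set.singleton_subset_iff.1 haQ)
  exact ⟨hQ, Set.singleton_subset_iff.2 (hY Q hQ a ha_comap b hb)⟩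

end

theorem stmt17_general {R R' : Type*} [CommRing R] [CommRing R'] (f : R →+* R')
    (X : Set (Ideal R))
    (Y : Set (Ideal R')) :
    ((∀ J : Ideal R', IsStrongHIdeal Y J → IsStrongHIdeal X (J.comap f)) ↔
      (∀ P ∈ Y, IsStrongHIdeal X (P.comap f))) ∧
    ((∀ J : Ideal R', IsHIdeal Y J → IsHIdeal X (J.comap f)) ↔
      (∀ P ∈ Y, IsHIdeal X (P.comap f))) :=
  ⟨⟨fun h P hP => h P (isStrongHIdeal_of_mem hP), fun h _ hJ => hJ.comap f h⟩,
    ⟨fun h P hP => h P (isHIdeal_of_mem hP), fun h _ hJ => hJ.comap f h⟩⟩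

/-- every strong `ℋ_Y`-ideal of `R'` contracts to a strong
`ℋ_X`-ideal of `R` iff every `P ∈ Y` contracts to a strong `ℋ_X`-ideal; likewise
for `ℋ`-ideals. -/
theorem stmt17 {R R' : Type*} [CommRing R] [CommRing R'] (f : R →+* R')
    (X : Set (Ideal R)) (hX : ∀ P ∈ X, P.IsPrime)
    (Y : Set (Ideal R')) (hY : ∀ P ∈ Y, P.IsPrime) :
    ((∀ J : Ideal R', IsStrongHIdeal Y J → IsStrongHIdeal X (J.comap f)) ↔
      (∀ P ∈ Y, IsStrongHIdeal X (P.comap f))) ∧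
    ((∀ J : Ideal R', IsHIdeal Y J → IsHIdeal X (J.comap f)) ↔
      (∀ P ∈ Y, IsHIdeal X (P.comap f))) :=
  stmt17_general f X Y
end
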